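/- arXiv:2311.18022 — 2 statements merged into one kernel-verified Lean document; each statement's English description precedes it below -/
import Mathlib

section
/- Let f_n(x) = x - Σ_{i=0}^{n-1} 4^{-(i+1)} W_i(x) be the depth-n tent-map approximation to x² on [0,1]. Then |f_n(x) - x²| ≤ 2^{-2n-2} for all x ∈ [0,1]; in particular the error decays exponentially in n. -/
/-- The symmetric tent map. -/
noncomputable def tent (x : ℝ) : ℝ := if x ≤ 1 / 2 then 2 * x else 2 - 2 * x

lemma tent_mem {x : ℝ} (hx : x ∈ Set.Icc (0:ℝ) 1) : tent x ∈ Set.Icc (0:ℝ) 1 := by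
  obtain ⟨h0, h1⟩ := hx
  unfold tent
  split_ifs with h <;> constructor <;> nlinarith

lemma tent_iter_mem (n : ℕ) {x : ℝ} (hx : x ∈ Set.Icc (0:ℝ) 1) :
    tent^[n] x ∈ Set.Icc (0:ℝ) 1 := by
  induction n with
  | zero => exact hx
  | succ k ih => rw [Function.iterate_succ_apply']; exact tent_mem ih

lemma tent_key (t : ℝ) : t - t ^ 2 - (1/4) * tent t = (1/4) * (tent t - (tent t) ^ 2) := by
  unfold tent
  split_ifs <;> ring

lemma closed_form (n : ℕ) (x : ℝ) :
    (x - ∑ i ∈ Finset.range n, (1 / 4 : ℝ) ^ (i + 1) * tent^[i + 1] x) - x ^ 2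
      = (1/4 : ℝ) ^ n * (tent^[n] x - (tent^[n] x) ^ 2) := by
  induction n with
  | zero => simp
  | succ k ih =>
      rw [Finset.sum_range_succ]
      have h := tent_key (tent^[k] x)
      have : (x - ∑ i ∈ Finset.range k, (1 / 4 : ℝ) ^ (i + 1) * tent^[i + 1] x)
          - x ^ 2 - (1/4:ℝ)^(k+1) * tent (tent^[k] x)
          = (1/4:ℝ)^k * ((tent^[k] x - (tent^[k] x)^2) - (1/4) * tent (tent^[k] x)) := by
        rw [ih]; ring
      calc (x - (∑ i ∈ Finset.range k, (1 / 4 : ℝ) ^ (i + 1) * tent^[i + 1] x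
              + (1/4:ℝ)^(k+1) * tent^[k+1] x)) - x ^ 2
          = (1/4:ℝ)^k * ((tent^[k] x - (tent^[k] x)^2) - (1/4) * tent (tent^[k] x)) := by
            rw [← this, Function.iterate_succ_apply']; ring
        _ = (1/4:ℝ)^(k+1) * (tent^[k+1] x - (tent^[k+1] x)^2) := by
            rw [Function.iterate_succ_apply', h]; ring

/-- The depth-`n` tent-map approximation
`f n x = x - ∑_{i<n} 4^{-(i+1)} tent^[i+1] x` to `x ^ 2` satisfies
`|f n x - x ^ 2| ≤ 2 ^ (-2n-2)` on `[0,1]`. -/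
theorem yarotsky_error_bound (n : ℕ) :
    ∀ x ∈ Set.Icc (0:ℝ) 1,
      |(x - ∑ i ∈ Finset.range n, (1 / 4 : ℝ) ^ (i + 1) * tent^[i + 1] x) - x ^ 2|
        ≤ (1 / 2 : ℝ) ^ (2 * n + 2) := by
  intro x hx
  rw [closed_form]
  obtain ⟨h0, h1⟩ := tent_iter_mem n hx
  set t := tent^[n] x
  have habs : |(1/4:ℝ)^n * (t - t^2)| = (1/4:ℝ)^n * |t - t^2| := by
    rw [abs_mul, abs_of_nonneg (by positivity)]
  have hb : |t - t^2| ≤ 1/4 := by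
    rw [abs_le]; constructor <;> nlinarith [sq_nonneg (t - 1/2)]
  have h2 : ((1:ℝ)/2)^(2*n+2) = (1/4:ℝ)^n * (1/4) := by
    rw [pow_add, pow_mul]; norm_num
  rw [habs, h2]
  exact mul_le_mul_of_nonneg_left hb (by positivity)
end

section
/- If F(x) = Σ_{i=0}^∞ s_i W_i(x) is built from triangle functions with peaks a_i ∈ [c,1-c] and coefficients satisfying s_{i+1} = s_i(1-a_{i+1})a_{i+2}, and F has a continuous second derivative at the peak points, then a_i = 1/2 for all relevant i; consequently the only twice continuously differentiable function representable in the family x ↦ x - Σ s_i W_i(x) (with s_0 = a_0 a_1) is x². -/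
noncomputable def T (a : ℝ) (x : ℝ) : ℝ :=
  if x ≤ a then x / a else 1 - (x - a) / (1 - a)

noncomputable def W (a : ℕ → ℝ) : ℕ → ℝ → ℝ
  | 0 => T (a 0)
  | n + 1 => fun x => T (a (n + 1)) (W a n x)

/-!
Let `H n` be the tail `∑ i, s (n + i) * W i` built from the shifted peaks `a n, a (n + 1), …`.
Since `T (a n)` maps both `[0, a n]` and `[a n, 1]` affinely onto `[0, 1]`,
`H n (a n * y) = s n * y + H (n + 1) y = H n (1 - (1 - a n) * y)`. Hence every `H n` is `C²` and
`H'' (n + 1) y = a n ^ 2 * H'' n (a n * y) = (1 - a n) ^ 2 * H'' n (1 - (1 - a n) * y)`.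
At `y = 1` both right-hand sides are evaluated at the peak `a n`, so `a n ≠ 1/2` forces
`H'' (n + 1) 1 = 0`, and then `H'' m 0 = 0` for every `m ≥ n + 2`. The two affine contractions
carry zeros of `H'' (m + 1)` to zeros of `H'' m`, so the zeros of `H'' (n + 2)` are dense in
`[0, 1]`: `H (n + 2)` is affine, vanishes at `0` and `1`, yet equals `s (n + 2) > 0` at its peak.

Once all peaks are `1/2`, `s i = 4⁻¹ ^ (i + 1)`, and the identity
`y - y ^ 2 = (T y + (T y - (T y) ^ 2)) / 4` for the tent map `T = T (1/2)` telescopes the series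
to `x - x ^ 2`.
-/

open Set Filter Topology

section Tent

variable {α : ℝ}

lemma mapsTo_T (h0 : 0 < α) (h1 : α < 1) : MapsTo (T α) (Icc 0 1) (Icc 0 1) := by
  rintro x ⟨hx0, hx1⟩
  unfold T
  split_ifs with h
  · exact ⟨by positivity, (div_le_one h0).2 h⟩
  · have : (x - α) / (1 - α) ≤ 1 := (div_le_one (by linarith)).2 (by linarith)
    have : 0 ≤ (x - α) / (1 - α) := div_nonneg (by linarith) (by linarith)
    constructor <;> linarith

lemma T_mul (h0 : 0 < α) {y : ℝ} (hy : y ≤ 1) : T α (α * y) = y := by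
  rw [T, if_pos (by nlinarith)]
  field_simp

lemma T_one_sub_mul (h0 : 0 < α) (h1 : α < 1) {y : ℝ} (hy : y ≤ 1) :
    T α (1 - (1 - α) * y) = y := by
  rw [T]
  split_ifs with h
  · obtain rfl : y = 1 := by nlinarith
    field_simp
    ring
  · have : 1 - α ≠ 0 := by linarith
    field_simp
    ring

lemma T_zero (h0 : 0 ≤ α) : T α 0 = 0 := by
  rw [T, if_pos h0, zero_div]

lemma T_one (h1 : α < 1) : T α 1 = 0 := by
  rw [T, if_neg (by linarith), div_self (by linarith)]
  ring

lemma mem_Ioo_of_mem_Icc_one_sub {c : ℝ} (hc : 0 < c) (h : α ∈ Icc c (1 - c)) :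
    α ∈ Ioo 0 1 :=
  ⟨hc.trans_le h.1, by linarith [h.2]⟩

lemma mapsTo_mul_Icc (h0 : 0 ≤ α) (h1 : α ≤ 1) :
    MapsTo (α * ·) (Icc (0 : ℝ) 1) (Icc 0 1) :=
  fun _ hy => unitInterval.mul_mem ⟨h0, h1⟩ hy

lemma mapsTo_one_sub_mul_Icc (h0 : 0 ≤ α) (h1 : α ≤ 1) :
    MapsTo (fun y => 1 - (1 - α) * y) (Icc (0 : ℝ) 1) (Icc 0 1) := fun _ hy =>
  Icc.mem_iff_one_sub_mem.1 (unitInterval.mul_mem (Icc.mem_iff_one_sub_mem.1 ⟨h0, h1⟩) hy)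

end Tent

section Composition

variable {a : ℕ → ℝ}

lemma mapsTo_W (ha : ∀ j, a j ∈ Ioo 0 1) (n : ℕ) : MapsTo (W a n) (Icc 0 1) (Icc 0 1) := by
  induction n with
  | zero => exact mapsTo_T (ha 0).1 (ha 0).2
  | succ n ih => exact (mapsTo_T (ha (n + 1)).1 (ha (n + 1)).2).comp ih

lemma W_apply_zero (ha : ∀ j, a j ∈ Ioo 0 1) (n : ℕ) : W a n 0 = 0 := by
  induction n with
  | zero => exact T_zero (ha 0).1.le
  | succ n ih => exact (congrArg _ ih).trans (T_zero (ha (n + 1)).1.le)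

lemma W_apply_one (ha : ∀ j, a j ∈ Ioo 0 1) (n : ℕ) : W a n 1 = 0 := by
  induction n with
  | zero => exact T_one (ha 0).2
  | succ n ih => exact (congrArg _ ih).trans (T_zero (ha (n + 1)).1.le)

lemma W_succ_eq_W_shift (n : ℕ) (x : ℝ) :
    W a (n + 1) x = W (fun j => a (j + 1)) n (T (a 0) x) := by
  induction n with
  | zero => rfl
  | succ n ih => exact congrArg (T (a (n + 2))) ih

end Composition

noncomputable def tailSum (a s : ℕ → ℝ) (n : ℕ) (x : ℝ) : ℝ :=
  ∑' i, s (n + i) * W (fun j => a (n + j)) i x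

section TailSum

variable {a s : ℕ → ℝ}

lemma tailSum_zero_eq_tsum (x : ℝ) : tailSum a s 0 x = ∑' i, s i * W a i x := by
  simp only [tailSum, zero_add]

lemma summable_tailSum (ha : ∀ j, a j ∈ Ioo 0 1) (hs : Summable s) (n : ℕ) {x : ℝ}
    (hx : x ∈ Icc 0 1) : Summable fun i => s (n + i) * W (fun j => a (n + j)) i x := by
  refine Summable.of_norm_bounded (g := fun i => |s (i + n)|)
    ((summable_nat_add_iff n).2 hs.abs) fun i => ?_
  obtain ⟨hW0, hW1⟩ := mapsTo_W (fun j => ha (n + j)) i hx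
  rw [Real.norm_eq_abs, abs_mul, abs_of_nonneg hW0, add_comm]
  exact mul_le_of_le_one_right (abs_nonneg _) hW1

lemma tailSum_eq_add (ha : ∀ j, a j ∈ Ioo 0 1) (hs : Summable s) (n : ℕ) {x : ℝ}
    (hx : x ∈ Icc 0 1) :
    tailSum a s n x = s n * T (a n) x + tailSum a s (n + 1) (T (a n) x) := by
  rw [tailSum, (summable_tailSum ha hs n hx).tsum_eq_zero_add, tailSum]
  congr 1
  refine tsum_congr fun i => ?_
  rw [W_succ_eq_W_shift]
  simp only [add_right_comm n, add_assoc]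
  rfl

lemma tailSum_mul (ha : ∀ j, a j ∈ Ioo 0 1) (hs : Summable s) (n : ℕ) {y : ℝ}
    (hy : y ∈ Icc 0 1) : tailSum a s n (a n * y) = s n * y + tailSum a s (n + 1) y := by
  rw [tailSum_eq_add ha hs n (mapsTo_mul_Icc (ha n).1.le (ha n).2.le hy), T_mul (ha n).1 hy.2]

lemma tailSum_one_sub_mul (ha : ∀ j, a j ∈ Ioo 0 1) (hs : Summable s) (n : ℕ) {y : ℝ}
    (hy : y ∈ Icc 0 1) :
    tailSum a s n (1 - (1 - a n) * y) = s n * y + tailSum a s (n + 1) y := by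
  rw [tailSum_eq_add ha hs n (mapsTo_one_sub_mul_Icc (ha n).1.le (ha n).2.le hy),
    T_one_sub_mul (ha n).1 (ha n).2 hy.2]

lemma tailSum_apply_zero (ha : ∀ j, a j ∈ Ioo 0 1) (n : ℕ) : tailSum a s n 0 = 0 := by
  simp only [tailSum, W_apply_zero fun j => ha (n + j), mul_zero, tsum_zero]

lemma tailSum_apply_one (ha : ∀ j, a j ∈ Ioo 0 1) (n : ℕ) : tailSum a s n 1 = 0 := by
  simp only [tailSum, W_apply_one fun j => ha (n + j), mul_zero, tsum_zero]

lemma tailSum_apply_self (ha : ∀ j, a j ∈ Ioo 0 1) (hs : Summable s) (n : ℕ) :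
    tailSum a s n (a n) = s n := by
  simpa [tailSum_apply_one ha] using tailSum_mul ha hs n (right_mem_Icc.2 zero_le_one)

lemma contDiffOn_tailSum_succ (ha : ∀ j, a j ∈ Ioo 0 1) (hs : Summable s) {n : ℕ}
    (hn : ContDiffOn ℝ 2 (tailSum a s n) (Icc 0 1)) :
    ContDiffOn ℝ 2 (tailSum a s (n + 1)) (Icc 0 1) := by
  refine ((hn.comp (contDiffOn_const.mul contDiffOn_id)
    (mapsTo_mul_Icc (ha n).1.le (ha n).2.le)).sub
    ((contDiffOn_const (c := s n)).mul contDiffOn_id)).congr fun y hy => ?_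
  simp [tailSum_mul ha hs n hy]

end TailSum

section SecondDerivative

variable {f g h : ℝ → ℝ} {s : Set ℝ} {α p : ℝ}

lemma derivWithin_derivWithin_comp_add_mul (hs : UniqueDiffOn ℝ s)
    (hh : ∀ x, HasDerivAt h α x) (hmaps : MapsTo h s s) (hf : ContDiffOn ℝ 2 f s)
    (hg : EqOn g (fun y => f (h y) + p * y) s) :
    EqOn (derivWithin (derivWithin g s) s)
      (fun y => α ^ 2 * derivWithin (derivWithin f s) s (h y)) s := by
  have hf1 : DifferentiableOn ℝ f s := hf.differentiableOn (by norm_num)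
  have hf2 : DifferentiableOn ℝ (derivWithin f s) s :=
    (hf.derivWithin hs (m := 1) (by norm_num)).differentiableOn (by norm_num)
  have hg1 : EqOn (derivWithin g s) (fun y => α * derivWithin f s (h y) + p) s := by
    intro y hy
    have : HasDerivWithinAt (fun y => f (h y) + p * y) (derivWithin f s (h y) * α + p * 1) s y :=
      ((hf1 _ (hmaps hy)).hasDerivWithinAt.comp y (hh y).hasDerivWithinAt hmaps).add
        ((hasDerivAt_id y).const_mul p).hasDerivWithinAt
    rw [derivWithin_congr hg (hg hy), this.derivWithin (hs y hy)]
    ring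
  intro y hy
  have : HasDerivWithinAt (fun y => α * derivWithin f s (h y) + p)
      (α * (derivWithin (derivWithin f s) s (h y) * α)) s y :=
    (((hf2 _ (hmaps hy)).hasDerivWithinAt.comp y (hh y).hasDerivWithinAt hmaps).const_mul
      α).add_const p
  rw [derivWithin_congr hg1 (hg1 hy), this.derivWithin (hs y hy)]
  ring

lemma eq_add_mul_of_derivWithin_derivWithin_eq_zero {a b : ℝ} (hab : a < b)
    (hf : ContDiffOn ℝ 2 f (Icc a b))
    (h : EqOn (derivWithin (derivWithin f (Icc a b)) (Icc a b)) 0 (Icc a b)) :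
    ∀ x ∈ Icc a b, f x = f a + derivWithin f (Icc a b) a * (x - a) := by
  have hs := uniqueDiffOn_Icc hab
  have hf1 : DifferentiableOn ℝ f (Icc a b) := hf.differentiableOn (by norm_num)
  have hf' := constant_of_derivWithin_zero
    ((hf.derivWithin hs (m := 1) (by norm_num)).differentiableOn (by norm_num))
    fun x hx => h (Ico_subset_Icc_self hx)
  set C := derivWithin f (Icc a b) a
  have hline : ∀ x, HasDerivAt (fun x => C * (x - a)) C x := fun x => by
    simpa using ((hasDerivAt_id x).sub_const a).const_mul C
  have key := constant_of_derivWithin_zero (f := fun x => f x - C * (x - a))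
    (hf1.sub fun x _ => (hline x).differentiableAt.differentiableWithinAt) fun x hx => by
      have hx' := Ico_subset_Icc_self hx
      have : HasDerivWithinAt (fun x => f x - C * (x - a)) (derivWithin f (Icc a b) x - C)
          (Icc a b) x := (hf1 x hx').hasDerivWithinAt.sub (hline x).hasDerivWithinAt
      rw [this.derivWithin (hs x hx'), hf' x hx', sub_self]
  intro x hx
  have := key x hx
  simp only [sub_self, mul_zero, sub_zero] at this
  linarith

end SecondDerivative

section Density

variable {Z : ℕ → Set ℝ} {a : ℕ → ℝ} {c : ℝ}

lemma exists_mem_abs_sub_le_pow (hc : 0 < c) (ha : ∀ m, a m ∈ Icc c (1 - c))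
    (h0 : ∀ m, (0 : ℝ) ∈ Z m) (hmul : ∀ m, MapsTo (a m * ·) (Z (m + 1)) (Z m))
    (hone_sub : ∀ m, MapsTo (fun y => 1 - (1 - a m) * y) (Z (m + 1)) (Z m)) (N m : ℕ) {y : ℝ}
    (hy : y ∈ Icc 0 1) : ∃ z ∈ Z m, |y - z| ≤ (1 - c) ^ N := by
  induction N generalizing m y with
  | zero => exact ⟨0, h0 m, by simpa [abs_of_nonneg hy.1] using hy.2⟩
  | succ N ih =>
    obtain ⟨hac, hac'⟩ := ha m
    have ham : a m ≠ 0 := by linarith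
    rcases le_total y (a m) with hle | hge
    · obtain ⟨z, hz, hdist⟩ := ih (m + 1) (y := y / a m)
        ⟨div_nonneg hy.1 (by linarith), (div_le_one (by linarith)).2 hle⟩
      refine ⟨a m * z, hmul m hz, ?_⟩
      have : y - a m * z = a m * (y / a m - z) := by
        field_simp
      rw [this, abs_mul, abs_of_pos (by linarith), pow_succ']
      exact mul_le_mul hac' hdist (abs_nonneg _) (by linarith)
    · obtain ⟨z, hz, hdist⟩ := ih (m + 1) (y := (1 - y) / (1 - a m))
        ⟨div_nonneg (by linarith [hy.2]) (by linarith),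
          (div_le_one (by linarith)).2 (by linarith)⟩
      refine ⟨1 - (1 - a m) * z, hone_sub m hz, ?_⟩
      have : y - (1 - (1 - a m) * z) = (1 - a m) * (z - (1 - y) / (1 - a m)) := by
        have : 1 - a m ≠ 0 := by linarith
        field_simp
        ring
      rw [this, abs_mul, abs_of_pos (by linarith), abs_sub_comm, pow_succ']
      exact mul_le_mul (by linarith) hdist (abs_nonneg _) (by linarith)

lemma Icc_subset_closure_of_mapsTo (hc : 0 < c) (ha : ∀ m, a m ∈ Icc c (1 - c))
    (h0 : ∀ m, (0 : ℝ) ∈ Z m) (hmul : ∀ m, MapsTo (a m * ·) (Z (m + 1)) (Z m))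
    (hone_sub : ∀ m, MapsTo (fun y => 1 - (1 - a m) * y) (Z (m + 1)) (Z m)) (m : ℕ) :
    Icc 0 1 ⊆ closure (Z m) := by
  intro y hy
  rw [Metric.mem_closure_iff]
  intro ε hε
  have hc1 : 1 - c < 1 := by linarith
  obtain ⟨N, hN⟩ := exists_pow_lt_of_lt_one hε hc1
  obtain ⟨z, hz, hdist⟩ := exists_mem_abs_sub_le_pow hc ha h0 hmul hone_sub N m hy
  exact ⟨z, hz, (Real.dist_eq y z).trans_le hdist |>.trans_lt hN⟩

end Density

noncomputable def tailSumDeriv2 (a s : ℕ → ℝ) (n : ℕ) : ℝ → ℝ :=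
  derivWithin (derivWithin (tailSum a s n) (Icc 0 1)) (Icc 0 1)

section Curvature

variable {a s : ℕ → ℝ}

lemma tailSumDeriv2_succ_eq_mul (ha : ∀ j, a j ∈ Ioo 0 1) (hs : Summable s) {n : ℕ}
    (hn : ContDiffOn ℝ 2 (tailSum a s n) (Icc 0 1)) {y : ℝ} (hy : y ∈ Icc 0 1) :
    tailSumDeriv2 a s (n + 1) y = a n ^ 2 * tailSumDeriv2 a s n (a n * y) :=
  derivWithin_derivWithin_comp_add_mul (uniqueDiffOn_Icc zero_lt_one)
    (fun x => by simpa using (hasDerivAt_id x).const_mul (a n))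
    (mapsTo_mul_Icc (ha n).1.le (ha n).2.le) hn
    (p := -s n) (fun x hx => by simp [tailSum_mul ha hs n hx]) hy

lemma tailSumDeriv2_succ_eq_one_sub_mul (ha : ∀ j, a j ∈ Ioo 0 1) (hs : Summable s) {n : ℕ}
    (hn : ContDiffOn ℝ 2 (tailSum a s n) (Icc 0 1)) {y : ℝ} (hy : y ∈ Icc 0 1) :
    tailSumDeriv2 a s (n + 1) y = (1 - a n) ^ 2 * tailSumDeriv2 a s n (1 - (1 - a n) * y) := by
  rw [← neg_sq]
  exact derivWithin_derivWithin_comp_add_mul (uniqueDiffOn_Icc zero_lt_one)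
    (fun x => by simpa using ((hasDerivAt_id x).const_mul (1 - a n)).const_sub 1)
    (mapsTo_one_sub_mul_Icc (ha n).1.le (ha n).2.le) hn
    (p := -s n) (fun x hx => by simp [tailSum_one_sub_mul ha hs n hx]) hy

lemma tailSumDeriv2_succ_one_eq_zero (ha : ∀ j, a j ∈ Ioo 0 1) (hs : Summable s) {n : ℕ}
    (hn : ContDiffOn ℝ 2 (tailSum a s n) (Icc 0 1)) (hne : a n ≠ 1 / 2) :
    tailSumDeriv2 a s (n + 1) 1 = 0 := by
  have h1 := right_mem_Icc.2 (zero_le_one' ℝ)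
  have hl := tailSumDeriv2_succ_eq_mul ha hs hn h1
  have hr := tailSumDeriv2_succ_eq_one_sub_mul ha hs hn h1
  rw [mul_one] at hl
  rw [mul_one, sub_sub_cancel] at hr
  have : (2 * a n - 1) * tailSumDeriv2 a s n (a n) = 0 := by linear_combination hr - hl
  have h2 : 2 * a n - 1 ≠ 0 := fun h => hne (by linarith)
  rw [hl, (mul_eq_zero.1 this).resolve_left h2, mul_zero]

end Curvature

section Rigidity

variable {a s : ℕ → ℝ} {c : ℝ}

lemma contDiffOn_tailSum (ha : ∀ j, a j ∈ Ioo 0 1) (hs : Summable s)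
    (h0 : ContDiffOn ℝ 2 (tailSum a s 0) (Icc 0 1)) (n : ℕ) :
    ContDiffOn ℝ 2 (tailSum a s n) (Icc 0 1) := by
  induction n with
  | zero => exact h0
  | succ n ih => exact contDiffOn_tailSum_succ ha hs ih

lemma tailSumDeriv2_apply_zero_of_ne_half (ha : ∀ j, a j ∈ Ioo 0 1) (hs : Summable s)
    (hsmooth : ∀ n, ContDiffOn ℝ 2 (tailSum a s n) (Icc 0 1)) {k : ℕ} (hk : a k ≠ 1 / 2)
    (j : ℕ) : tailSumDeriv2 a s (k + 2 + j) 0 = 0 := by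
  have h0 := left_mem_Icc.2 (zero_le_one' ℝ)
  induction j with
  | zero =>
    rw [add_zero, tailSumDeriv2_succ_eq_one_sub_mul ha hs (hsmooth _) h0, mul_zero, sub_zero,
      tailSumDeriv2_succ_one_eq_zero ha hs (hsmooth k) hk, mul_zero]
  | succ j ih =>
    rw [← add_assoc, tailSumDeriv2_succ_eq_mul ha hs (hsmooth _) h0, mul_zero, ih, mul_zero]

lemma tailSumDeriv2_eqOn_zero_of_ne_half (hc : 0 < c) (ha : ∀ j, a j ∈ Icc c (1 - c))
    (hs : Summable s) (hsmooth : ∀ n, ContDiffOn ℝ 2 (tailSum a s n) (Icc 0 1)) {k : ℕ}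
    (hk : a k ≠ 1 / 2) : EqOn (tailSumDeriv2 a s (k + 2)) 0 (Icc 0 1) := by
  have ha' : ∀ j, a j ∈ Ioo 0 1 := fun j => mem_Ioo_of_mem_Icc_one_sub hc (ha j)
  have hu := uniqueDiffOn_Icc (zero_lt_one' ℝ)
  set Z : ℕ → Set ℝ := fun j => {y ∈ Icc 0 1 | tailSumDeriv2 a s (k + 2 + j) y = 0}
  have hmul : ∀ j, MapsTo (a (k + 2 + j) * ·) (Z (j + 1)) (Z j) := fun j y ⟨hy, hzero⟩ =>
    ⟨mapsTo_mul_Icc (ha' _).1.le (ha' _).2.le hy,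
      (mul_eq_zero.1 ((tailSumDeriv2_succ_eq_mul ha' hs (hsmooth _) hy).symm.trans
        hzero)).resolve_left (pow_ne_zero 2 (ha' _).1.ne')⟩
  have hone_sub : ∀ j, MapsTo (fun y => 1 - (1 - a (k + 2 + j)) * y) (Z (j + 1)) (Z j) :=
    fun j y ⟨hy, hzero⟩ => ⟨mapsTo_one_sub_mul_Icc (ha' _).1.le (ha' _).2.le hy,
      (mul_eq_zero.1 ((tailSumDeriv2_succ_eq_one_sub_mul ha' hs (hsmooth _) hy).symm.trans
        hzero)).resolve_left (pow_ne_zero 2 (sub_ne_zero.2 (ha' _).2.ne'))⟩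
  have hdense : Icc 0 1 ⊆ closure (Z 0) :=
    Icc_subset_closure_of_mapsTo (Z := Z) hc (fun j => ha (k + 2 + j)) (fun j =>
      ⟨left_mem_Icc.2 zero_le_one, tailSumDeriv2_apply_zero_of_ne_half ha' hs hsmooth hk j⟩)
      hmul hone_sub 0
  have hclosed : IsClosed (Z 0) :=
    (((hsmooth _).derivWithin hu (m := 1) (by norm_num)).continuousOn_derivWithin hu
      le_rfl).preimage_isClosed_of_isClosed isClosed_Icc isClosed_singleton
  exact fun y hy => (hclosed.closure_subset (hdense hy)).2

lemma eq_half_of_contDiffOn_tailSum (hc : 0 < c) (ha : ∀ j, a j ∈ Icc c (1 - c))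
    (hs : Summable s) (hs_ne : ∀ n, s n ≠ 0) (h0 : ContDiffOn ℝ 2 (tailSum a s 0) (Icc 0 1))
    (k : ℕ) : a k = 1 / 2 := by
  by_contra hk
  have ha' : ∀ j, a j ∈ Ioo 0 1 := fun j => mem_Ioo_of_mem_Icc_one_sub hc (ha j)
  have hsmooth := contDiffOn_tailSum ha' hs h0
  have hline := eq_add_mul_of_derivWithin_derivWithin_eq_zero zero_lt_one (hsmooth (k + 2))
    (tailSumDeriv2_eqOn_zero_of_ne_half hc ha hs hsmooth hk)
  have h1 := hline 1 (right_mem_Icc.2 zero_le_one)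
  have hpeak := hline (a (k + 2)) ⟨(ha' _).1.le, (ha' _).2.le⟩
  rw [tailSum_apply_one ha', tailSum_apply_zero ha'] at h1
  rw [tailSum_apply_self ha' hs, tailSum_apply_zero ha'] at hpeak
  simp only [zero_add, sub_zero, mul_one] at h1 hpeak
  exact hs_ne (k + 2) (by rw [hpeak, ← h1, zero_mul])

end Rigidity

section Coefficients

variable {a s : ℕ → ℝ} {c : ℝ}

lemma pos_of_recurrence (ha : ∀ i, a i ∈ Ioo 0 1) (hs0 : s 0 = a 0 * a 1)
    (hrec : ∀ i, s (i + 1) = s i * (1 - a (i + 1)) * a (i + 2)) (n : ℕ) : 0 < s n := by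
  induction n with
  | zero => rw [hs0]; exact mul_pos (ha 0).1 (ha 1).1
  | succ n ih =>
    rw [hrec n]
    exact mul_pos (mul_pos ih (sub_pos.2 (ha (n + 1)).2)) (ha (n + 2)).1

lemma summable_of_recurrence (hc : 0 < c) (ha : ∀ i, a i ∈ Icc c (1 - c))
    (hrec : ∀ i, s (i + 1) = s i * (1 - a (i + 1)) * a (i + 2)) : Summable s := by
  refine summable_of_ratio_norm_eventually_le (r := 1 - c) (by linarith)
    (Eventually.of_forall fun n => ?_)
  obtain ⟨h1, h1'⟩ := ha (n + 1)
  obtain ⟨h2, h2'⟩ := ha (n + 2)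
  have hfactor : ‖(1 - a (n + 1)) * a (n + 2)‖ ≤ 1 - c := by
    rw [Real.norm_eq_abs, abs_of_nonneg (mul_nonneg (by linarith) (by linarith))]
    nlinarith
  rw [hrec n, mul_assoc, norm_mul, mul_comm (1 - c)]
  exact mul_le_mul_of_nonneg_left hfactor (norm_nonneg _)

end Coefficients

section HalfPeaks

lemma sub_sq_eq_T_half (y : ℝ) :
    y - y ^ 2 = T (1 / 2) y / 4 + (T (1 / 2) y - T (1 / 2) y ^ 2) / 4 := by
  rw [T]
  split_ifs <;> ring

lemma W_eq_iterate_of_forall_eq_half {a : ℕ → ℝ} (h : ∀ i, a i = 1 / 2) (n : ℕ) :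
    W a n = (T (1 / 2))^[n + 1] := by
  induction n with
  | zero => simp [W, h 0]
  | succ n ih =>
    funext x
    rw [Function.iterate_succ_apply', ← ih, ← h (n + 1)]
    rfl

lemma hasSum_T_half_iterate {x : ℝ} (hx : x ∈ Icc 0 1) :
    HasSum (fun i => (1 / 4 : ℝ) ^ (i + 1) * (T (1 / 2))^[i + 1] x) (x - x ^ 2) := by
  set q : ℕ → ℝ := fun n => (T (1 / 2))^[n] x
  have hq : ∀ n, q n ∈ Icc 0 1 :=
    fun n => (mapsTo_T (by norm_num) (by norm_num)).iterate n hx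
  have hpartial : ∀ n, ∑ i ∈ Finset.range n, (1 / 4 : ℝ) ^ (i + 1) * q (i + 1) =
      (x - x ^ 2) - (1 / 4) ^ n * (q n - q n ^ 2) := by
    intro n
    induction n with
    | zero => simp [q]
    | succ n ih =>
      have hstep : q (n + 1) = T (1 / 2) (q n) := Function.iterate_succ_apply' _ _ _
      rw [Finset.sum_range_succ, ih, hstep]
      linear_combination (-(1 / 4 : ℝ) ^ n) * sub_sq_eq_T_half (q n)
  have hrem : Tendsto (fun n => (1 / 4 : ℝ) ^ n * (q n - q n ^ 2)) atTop (𝓝 0) := by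
    refine squeeze_zero (fun n => mul_nonneg (by positivity) ?_) (fun n => ?_)
      (tendsto_pow_atTop_nhds_zero_of_lt_one (by norm_num) (by norm_num : (1 / 4 : ℝ) < 1))
    · nlinarith [mul_nonneg (hq n).1 (sub_nonneg.2 (hq n).2)]
    · exact mul_le_of_le_one_right (by positivity) (by nlinarith [hq n])
  rw [hasSum_iff_tendsto_nat_of_nonneg fun i => mul_nonneg (by positivity) (hq _).1]
  simp only [hpartial]
  simpa using tendsto_const_nhds.sub hrem

end HalfPeaks

/-- If the compositional-network output `x - ∑ s i * W i x` (with `s 0 = a 0 * a 1`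
and coefficients obeying the differentiability recurrence) is twice continuously
differentiable, then all peak parameters equal `1/2` and the output is `x ^ 2`. -/
theorem second_derivative_forces_square (a : ℕ → ℝ) (s : ℕ → ℝ) (c : ℝ)
    (hc : c ∈ Set.Ioo (0:ℝ) (1/2)) (ha : ∀ i, a i ∈ Set.Icc c (1 - c))
    (hs0 : s 0 = a 0 * a 1)
    (hrec : ∀ i, s (i + 1) = s i * (1 - a (i + 1)) * a (i + 2))
    (hsmooth : ContDiffOn ℝ 2
      (fun x => x - ∑' i : ℕ, s i * W a i x) (Set.Icc (0:ℝ) 1)) :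
    (∀ i, a i = 1 / 2) ∧
    (∀ x ∈ Set.Icc (0:ℝ) 1, x - ∑' i : ℕ, s i * W a i x = x ^ 2) := by
  have ha' : ∀ i, a i ∈ Ioo 0 1 := fun i => mem_Ioo_of_mem_Icc_one_sub hc.1 (ha i)
  have hs_pos := pos_of_recurrence ha' hs0 hrec
  have h0 : ContDiffOn ℝ 2 (tailSum a s 0) (Icc 0 1) :=
    (contDiffOn_id.sub hsmooth).congr fun x _ => by simp [tailSum_zero_eq_tsum]
  have hhalf : ∀ i, a i = 1 / 2 := eq_half_of_contDiffOn_tailSum hc.1 ha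
    (summable_of_recurrence hc.1 ha hrec) (fun n => (hs_pos n).ne') h0
  have hs : ∀ i, s i = (1 / 4) ^ (i + 1) := by
    intro i
    induction i with
    | zero => rw [hs0, hhalf 0, hhalf 1]; norm_num
    | succ n ih => rw [hrec n, ih, hhalf, hhalf]; ring
  refine ⟨hhalf, fun x hx => ?_⟩
  simp only [hs, W_eq_iterate_of_forall_eq_half hhalf]
  rw [(hasSum_T_half_iterate hx).tsum_eq]
  ring
end
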